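/- Let Q = {y ∈ Q^n | A y ≤ c} be a pointed polyhedron with A of full column rank whose first n rows are linearly independent, and let T = {(λ, α, β) ∈ Q^m × Q^n × Q | λᵀA = αᵀ, λᵀc ≤ β, λ ≥ 0}. Let W = {(v, w, v₀) ∈ Q^n × Q^{m−n} × Q | −[vᵀ,wᵀ]A₀⁻¹c + v₀ ≥ 0, [vᵀ,wᵀ]A₀⁻¹ ≥ 0}, where A₀ = [A, e_{n+1}, ..., e_m] is invertible. Then the subsumption cone proj(T; {α, β}) equals the initial redundancy test cone proj(W; {v, v₀}) (identifying α with v and β with v₀). -/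
import Mathlib

open Matrix

/-- Augment an `m × n` matrix (with `n ≤ m`) with the last `m − n` standard
basis columns, producing the square matrix `A₀ = [A, e_{n+1}, …, e_m]`. -/
def augMat (m n : ℕ) (A : Matrix (Fin m) (Fin n) ℚ) : Matrix (Fin m) (Fin m) ℚ :=
  Matrix.of fun i j =>
    if h : (j : ℕ) < n then A i ⟨(j : ℕ), h⟩
    else if (i : ℕ) = (j : ℕ) then 1 else 0

/-- The subsumption cone `proj(T; {α, β})` where
`T = {(λ, α, β) | λᵀA = αᵀ, λᵀc ≤ β, λ ≥ 0}`. -/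
def subsumptionCone (m n : ℕ) (A : Matrix (Fin m) (Fin n) ℚ) (c : Fin m → ℚ) :
    Set ((Fin n → ℚ) × ℚ) :=
  { ab | ∃ l : Fin m → ℚ, 0 ≤ l ∧ Matrix.vecMul l A = ab.1 ∧ l ⬝ᵥ c ≤ ab.2 }

/-- The initial redundancy test cone `proj(W; {v, v₀})` where
`W = {(v,w,v₀) | −[vᵀ,wᵀ]A₀⁻¹c + v₀ ≥ 0, [vᵀ,wᵀ]A₀⁻¹ ≥ 0}`;
here `y` plays the role of `[vᵀ, wᵀ]`. -/
def initialTestCone (m n : ℕ) (hnm : n ≤ m) (A : Matrix (Fin m) (Fin n) ℚ)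
    (c : Fin m → ℚ) : Set ((Fin n → ℚ) × ℚ) :=
  { vv | ∃ y : Fin m → ℚ,
      (∀ i : Fin n, y (Fin.castLE hnm i) = vv.1 i) ∧
      0 ≤ Matrix.vecMul y (augMat m n A)⁻¹ ∧
      0 ≤ -(Matrix.vecMul y (augMat m n A)⁻¹ ⬝ᵥ c) + vv.2 }

lemma augMat_mulVec (m n : ℕ) (hnm : n ≤ m) (A : Matrix (Fin m) (Fin n) ℚ)
    (x : Fin m → ℚ) (i : Fin m) :
    (augMat m n A).mulVec x i =
      (∑ j : Fin n, A i j * x (Fin.castLE hnm j)) +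
        (if n ≤ (i : ℕ) then x i else 0) := by
  have hsplit : ∀ j : Fin m,
      (augMat m n A) i j * x j =
        (if h : (j : ℕ) < n then A i ⟨(j : ℕ), h⟩ * x j else 0) +
          (if i = j then (if n ≤ (j : ℕ) then x j else 0) else 0) := by
    intro j
    by_cases h : (j : ℕ) < n
    · simp [augMat, h, Nat.not_le.2 h]
    · by_cases hij : i = j
      · subst hij
        simp [augMat, h, Nat.le_of_not_lt h]
      · have : (i : ℕ) ≠ (j : ℕ) := fun hc => hij (Fin.ext hc)
        simp [augMat, h, this, hij]
  rw [Matrix.mulVec, dotProduct]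
  rw [Finset.sum_congr rfl fun j _ => hsplit j, Finset.sum_add_distrib]
  congr 1
  · rw [Fin.sum_univ_eq_sum_range
      (fun j => if h : j < n then A i ⟨j, h⟩ * x ⟨j, by omega⟩ else 0)]
    · rw [← Finset.sum_subset (Finset.range_subset_range.2 hnm)
        (by intro j _ hj; simp at hj; simp [hj])]
      rw [← Fin.sum_univ_eq_sum_range
        (fun j => if h : j < n then A i ⟨j, h⟩ * x ⟨j, by omega⟩ else 0)]
      apply Finset.sum_congr rfl
      intro j _
      simp [j.isLt, Fin.castLE]
  · rw [Finset.sum_ite_eq]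
    simp

lemma augMat_isUnit (m n : ℕ) (hnm : n ≤ m) (A : Matrix (Fin m) (Fin n) ℚ)
    (hindep : LinearIndependent ℚ (fun i : Fin n => A (Fin.castLE hnm i))) :
    IsUnit (augMat m n A) := by
  rw [← Matrix.mulVec_injective_iff_isUnit]
  have hker : ∀ x : Fin m → ℚ, (augMat m n A).mulVec x = 0 → x = 0 := by
    intro x hx
    set B : Matrix (Fin n) (Fin n) ℚ := Matrix.of fun i j => A (Fin.castLE hnm i) j with hB
    have hBunit : IsUnit B := by
      rw [← Matrix.linearIndependent_rows_iff_isUnit]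
      exact hindep
    have hx' : B.mulVec (fun j => x (Fin.castLE hnm j)) = 0 := by
      funext i
      have := augMat_mulVec m n hnm A x (Fin.castLE hnm i)
      have hlt : ¬ n ≤ ((Fin.castLE hnm i : Fin m) : ℕ) := by
        simp
      rw [hx, if_neg hlt] at this
      simp only [Pi.zero_apply, add_zero] at this
      simpa [Matrix.mulVec, dotProduct, hB] using this.symm
    have hxz : (fun j => x (Fin.castLE hnm j)) = 0 :=
      Matrix.mulVec_injective_iff_isUnit.2 hBunit (by simpa using hx')
    funext i
    by_cases h : (i : ℕ) < n
    · have : x (Fin.castLE hnm ⟨(i : ℕ), h⟩) = 0 := congrFun hxz ⟨(i : ℕ), h⟩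
      simpa [Fin.castLE] using this
    · have := augMat_mulVec m n hnm A x i
      rw [hx] at this
      have hz : ∀ j : Fin n, x (Fin.castLE hnm j) = 0 := fun j => congrFun hxz j
      simp [Nat.le_of_not_lt h, hz] at this
      simpa using this.symm
  intro x y hxy
  have : (augMat m n A).mulVec (x - y) = 0 := by
    rw [Matrix.mulVec_sub, hxy, sub_self]
  have := hker _ this
  exact sub_eq_zero.mp this

lemma vecMul_augMat_castLE (m n : ℕ) (hnm : n ≤ m) (A : Matrix (Fin m) (Fin n) ℚ)
    (l : Fin m → ℚ) (i : Fin n) :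
    Matrix.vecMul l (augMat m n A) (Fin.castLE hnm i) = Matrix.vecMul l A i := by
  rw [Matrix.vecMul, Matrix.vecMul, dotProduct, dotProduct]
  apply Finset.sum_congr rfl
  intro k _
  have h : ((Fin.castLE hnm i : Fin m) : ℕ) < n := i.isLt
  simp [augMat, h, Fin.castLE]

/-- The subsumption cone of a pointed polyhedron `{y | A y ≤ c}` (with `A`
of full column rank whose first `n` rows are linearly independent) equals
the initial redundancy test cone, identifying `α` with `v` and `β` with `v₀`. -/
theorem subsumptionCone_eq_initialTestCone (m n : ℕ) (hnm : n ≤ m)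
    (A : Matrix (Fin m) (Fin n) ℚ) (c : Fin m → ℚ)
    (hrank : A.rank = n)
    (hindep : LinearIndependent ℚ (fun i : Fin n => A (Fin.castLE hnm i))) :
    subsumptionCone m n A c = initialTestCone m n hnm A c := by
  have hunit := augMat_isUnit m n hnm A hindep
  set M := augMat m n A with hM
  have hMinv : M * M⁻¹ = 1 := Matrix.mul_nonsing_inv M ((Matrix.isUnit_iff_isUnit_det M).mp hunit)
  have hinvM : M⁻¹ * M = 1 := Matrix.nonsing_inv_mul M ((Matrix.isUnit_iff_isUnit_det M).mp hunit)
  ext ⟨v, v₀⟩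
  constructor
  · rintro ⟨l, hl0, hlA, hlc⟩
    refine ⟨Matrix.vecMul l M, ?_, ?_, ?_⟩
    · intro i
      rw [vecMul_augMat_castLE m n hnm A l i, hlA]
    · have : Matrix.vecMul (Matrix.vecMul l M) M⁻¹ = l := by
        rw [Matrix.vecMul_vecMul, hMinv, Matrix.vecMul_one]
      rw [this]; exact hl0
    · have : Matrix.vecMul (Matrix.vecMul l M) M⁻¹ = l := by
        rw [Matrix.vecMul_vecMul, hMinv, Matrix.vecMul_one]
      rw [this]; linarith
  · rintro ⟨y, hy, hl0, hlc⟩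
    refine ⟨Matrix.vecMul y M⁻¹, hl0, ?_, by linarith⟩
    funext i
    have hyy : Matrix.vecMul (Matrix.vecMul y M⁻¹) M = y := by
      rw [Matrix.vecMul_vecMul, hinvM, Matrix.vecMul_one]
    have := vecMul_augMat_castLE m n hnm A (Matrix.vecMul y M⁻¹) i
    rw [hyy] at this
    rw [← this, hy i]
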